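/- Let A = {u_i ⊗ v_i ⊗ w_i : i = 1,…,r} be an algorithm computing ⟨m,n,p⟩. Then the set {u_i} has the D-property if and only if there exist a ∈ GL_m(ℂ) and b ∈ GL_n(ℂ) such that every matrix unit e_{ij} (1 ≤ i ≤ m, 1 ≤ j ≤ n) lies in the set {a u_i b⁻¹ : i = 1,…,r}. -/

import Mathlib

open TensorProduct Kronecker Matrix

/-- The matrix multiplication tensor `⟨m,n,p⟩`. -/
noncomputable def MMT (m n p : ℕ) :
    Matrix (Fin m) (Fin n) ℂ ⊗[ℂ] (Matrix (Fin n) (Fin p) ℂ ⊗[ℂ] Matrix (Fin p) (Fin m) ℂ) :=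
  ∑ i : Fin m, ∑ j : Fin n, ∑ k : Fin p,
    Matrix.single i j (1 : ℂ) ⊗ₜ[ℂ]
      (Matrix.single j k (1 : ℂ) ⊗ₜ[ℂ] Matrix.single k i (1 : ℂ))

/-- The matrix `U_{mn} ∈ ℂ^{mn×mn}` whose `q`-th column is the row-wise vectorization
`R(u_{s q})` of the selected matrix `u_{s q}` (rows and columns indexed row-major by
`Fin m × Fin n`). -/
def colMatrix {m n r : ℕ} (u : Fin r → Matrix (Fin m) (Fin n) ℂ)
    (s : Fin m × Fin n → Fin r) : Matrix (Fin m × Fin n) (Fin m × Fin n) ℂ :=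
  Matrix.of fun q q' => u (s q') q.1 q.2

/-- The set `{u_i}` has the *D-property*: for some choice of `mn` of the `u_i` whose
vectorizations form an invertible matrix `U_{mn}` (a maximal linearly independent
subset), `U_{mn} = U_m ⊗ U_n` is a Kronecker product of invertible matrices. -/
def DProp {m n r : ℕ} (u : Fin r → Matrix (Fin m) (Fin n) ℂ) : Prop :=
  ∃ (s : Fin m × Fin n → Fin r) (Um : Matrix (Fin m) (Fin m) ℂ)
    (Un : Matrix (Fin n) (Fin n) ℂ),
      IsUnit Um ∧ IsUnit Un ∧ colMatrix u s = Um ⊗ₖ Un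

/-!
The column of `Um ⊗ₖ Un` indexed by `(i, j)` is the row-wise vectorization of
`Um * e_{ij} * Unᵀ`. Hence `U_{mn} = Um ⊗ₖ Un` says exactly that the selected matrices are
`Um e_{ij} Unᵀ`, i.e. that `a u b⁻¹` runs through all matrix units for `a = Um⁻¹`,
`b = Unᵀ`.
-/

namespace Matrix

variable {l m n o α : Type*} [Fintype m] [Fintype n] [DecidableEq m] [DecidableEq n]

theorem mul_single_mul_apply [NonUnitalNonAssocSemiring α] (A : Matrix l m α)
    (B : Matrix n o α) (i : m) (j : n) (c : α) (x : l) (y : o) :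
    (A * single i j c * B) x y = A x i * c * B j y := by
  simp [mul_apply, single_apply, ite_and, Finset.sum_ite_eq]

theorem mul_mul_nonsing_inv_eq_iff [CommRing α] {a : Matrix m m α} {b : Matrix n n α}
    (ha : IsUnit a) (hb : IsUnit b) {X Y : Matrix m n α} :
    a * X * b⁻¹ = Y ↔ X = a⁻¹ * Y * b := by
  have := ha.invertible
  have := hb.invertible
  rw [mul_inv_eq_iff_eq_mul_of_invertible, eq_comm, ← inv_mul_eq_iff_eq_mul_of_invertible,
    Matrix.mul_assoc, eq_comm]

end Matrix

theorem colMatrix_eq_kronecker_iff {m n r : ℕ} (u : Fin r → Matrix (Fin m) (Fin n) ℂ)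
    (s : Fin m × Fin n → Fin r) (Um : Matrix (Fin m) (Fin m) ℂ)
    (Un : Matrix (Fin n) (Fin n) ℂ) :
    colMatrix u s = Um ⊗ₖ Un ↔ ∀ q, u (s q) = Um * single q.1 q.2 (1 : ℂ) * Unᵀ := by
  constructor
  · intro hcol q
    ext x y
    rw [mul_single_mul_apply, mul_one, transpose_apply]
    exact congrFun (congrFun hcol (x, y)) q
  · intro hu
    ext q q'
    simp only [colMatrix, of_apply, kroneckerMap_apply, hu, mul_single_mul_apply, mul_one,
      transpose_apply]

theorem dProp_iff_units_general (m n r : ℕ)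
    (u : Fin r → Matrix (Fin m) (Fin n) ℂ) :
    DProp u ↔ ∃ (a : Matrix (Fin m) (Fin m) ℂ) (b : Matrix (Fin n) (Fin n) ℂ),
      IsUnit a ∧ IsUnit b ∧
      ∀ (i : Fin m) (j : Fin n), ∃ k : Fin r,
        a * u k * b⁻¹ = Matrix.single i j (1 : ℂ) := by
  constructor
  · rintro ⟨s, Um, Un, hUm, hUn, hcol⟩
    rw [colMatrix_eq_kronecker_iff] at hcol
    have hUm' : IsUnit Um⁻¹ := isUnit_nonsing_inv_iff.mpr hUm
    have hUn' : IsUnit Unᵀ := (isUnit_transpose _).mpr hUn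
    refine ⟨Um⁻¹, Unᵀ, hUm', hUn', fun i j => ⟨s (i, j), ?_⟩⟩
    rw [mul_mul_nonsing_inv_eq_iff hUm' hUn',
      nonsing_inv_nonsing_inv _ ((isUnit_iff_isUnit_det _).mp hUm)]
    exact hcol (i, j)
  · rintro ⟨a, b, ha, hb, hunits⟩
    choose s hs using fun q : Fin m × Fin n => hunits q.1 q.2
    refine ⟨s, a⁻¹, bᵀ, isUnit_nonsing_inv_iff.mpr ha, (isUnit_transpose _).mpr hb,
      (colMatrix_eq_kronecker_iff u s _ _).mpr fun q => ?_⟩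
    rw [transpose_transpose]
    exact (mul_mul_nonsing_inv_eq_iff ha hb).mp (hs q)

/-- Let `A = {u_i ⊗ v_i ⊗ w_i}` be an algorithm computing `⟨m,n,p⟩`.
Then `{u_i}` has the D-property if and only if there exist `a ∈ GL_m(ℂ)`,
`b ∈ GL_n(ℂ)` with all matrix units `e_{ij}` contained in `{a u_i b⁻¹}`. -/
theorem dProp_iff_units (m n p r : ℕ)
    (u : Fin r → Matrix (Fin m) (Fin n) ℂ)
    (v : Fin r → Matrix (Fin n) (Fin p) ℂ)
    (w : Fin r → Matrix (Fin p) (Fin m) ℂ)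
    (h : MMT m n p = ∑ i : Fin r, u i ⊗ₜ[ℂ] (v i ⊗ₜ[ℂ] w i)) :
    DProp u ↔ ∃ (a : Matrix (Fin m) (Fin m) ℂ) (b : Matrix (Fin n) (Fin n) ℂ),
      IsUnit a ∧ IsUnit b ∧
      ∀ (i : Fin m) (j : Fin n), ∃ k : Fin r,
        a * u k * b⁻¹ = Matrix.single i j (1 : ℂ) :=
  dProp_iff_units_general m n r u
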